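/- Fix constants 0 < α ≤ 1, c > 0, an integer Δ ≥ 1, and a function f on the positive integers with f(k) ≥ c for all k, and let K = min{u : for every k ≥ u, k·f(k) > 1/α}. Set β = (1/Δ)·min{1/K, αc/4}. For every ε > 0 there exists n₀ such that for every n ≥ n₀ and every graph G on n vertices with maximum degree at most Δ that is an f-expander, with probability at least 1 − ε under the deletion process with parameter α, the induced subgraph of G on the largest connected component V̂₁ of Ĝ is a β-expander. -/

import Mathlib

open MeasureTheory

noncomputable def bern (p : ENNReal) : Measure Bool :=
  (PMF.bernoulli (min p 1).toNNReal
    (by simpa using ENNReal.toNNReal_mono ENNReal.one_ne_top (min_le_right p 1))).toMeasure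

noncomputable def delMeasure (n : ℕ) (α : ℝ) : Measure (Fin n → Bool) :=
  Measure.pi fun _ => bern (ENNReal.ofReal ((n : ℝ) ^ (-α)))

def survivors {n : ℕ} (ω : Fin n → Bool) : Set (Fin n) := {v | ω v = false}

def nbhd {V : Type*} (H : SimpleGraph V) (U : Set V) : Set V :=
  {v | v ∉ U ∧ ∃ u ∈ U, H.Adj u v}

def IsBetaExpander {V : Type*} (H : SimpleGraph V) (β : ℝ) : Prop :=
  ∀ U : Set V, U.Nonempty → (U.ncard : ℝ) ≤ (Nat.card V : ℝ) / 2 →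
    β * U.ncard ≤ ((nbhd H U).ncard : ℝ)

def IsFExpander {V : Type*} (H : SimpleGraph V) (f : ℕ → ℝ) : Prop :=
  ∀ U : Set V, U.Nonempty → (U.ncard : ℝ) ≤ (Nat.card V : ℝ) / 2 →
    f U.ncard * U.ncard ≤ ((nbhd H U).ncard : ℝ)

noncomputable def Kconst (α : ℝ) (f : ℕ → ℝ) : ℕ :=
  sInf {u : ℕ | 1 ≤ u ∧ ∀ k : ℕ, u ≤ k → 1 / α < (k : ℝ) * f k}

/-!
Fix `T ≈ 2/α`, `θ = 3c/(4(1+c))` and `m ≈ 4T/θ`. Call the deleted set *sparse* if every connected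
set `P` of `G` containing at least `T` deleted vertices contains at most `θ |P|` of them. A closed
walk of length less than `2 |P|` visits all of a connected set `P`; cutting its vertex sequence
into blocks of `m` shows that the deleted set is sparse as soon as no walk with at most `m`
vertices contains `T` deleted vertices. There are at most `m n (Δ+1)^m` such walks, each failing
with probability at most `2^m n^(-αT)`, so by the union bound sparseness fails with probability
`O(n^(1-αT)) = O(1/n)`.

If the deletion is sparse, every component `C` of the surviving graph is an `αc/4`-expander, and
`β ≤ αc/4`. Given `U ⊆ C` with `|U| ≤ |C|/2`, split `U` along the components of `G[U ∪ N(U)]`.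
Each piece `A` has a surviving neighbour, since otherwise `C ⊆ A`. If fewer than `αc|A|/4` of its
at least `c|A|` neighbours survived, more than three quarters of `N(A)` would be deleted: at least
`T` vertices, and more than a `θ`-fraction of the connected set `A ∪ N(A)`.
-/

theorem List.ncard_inter_le_mul_of_infix {α : Type*} (X : Set α) {m r : ℕ} (hm : 0 < m)
    (l : List α) (h : ∀ l', l' <:+: l → l'.length ≤ m → ({x | x ∈ l'} ∩ X).ncard ≤ r) :
    ({x | x ∈ l} ∩ X).ncard ≤ r * (l.length / m + 1) := by
  by_cases hl : l.length ≤ m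
  · exact (h l (List.infix_refl l) hl).trans (Nat.le_mul_of_pos_right r (Nat.succ_pos _))
  have ih := List.ncard_inter_le_mul_of_infix X hm (l.drop m)
    fun l' hl' => h l' (hl'.trans (List.drop_suffix m l).isInfix)
  have hsplit : {x | x ∈ l} ∩ X ⊆ ({x | x ∈ l.take m} ∩ X) ∪ ({x | x ∈ l.drop m} ∩ X) := by
    rintro x ⟨hx, hX⟩
    rw [Set.mem_ofPred_eq, ← List.take_append_drop m l, List.mem_append] at hx
    exact hx.imp (⟨·, hX⟩) (⟨·, hX⟩)
  obtain ⟨k, hk⟩ : ∃ k, l.length = k + m := ⟨l.length - m, by omega⟩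
  calc ({x | x ∈ l} ∩ X).ncard
      ≤ ({x | x ∈ l.take m} ∩ X).ncard + ({x | x ∈ l.drop m} ∩ X).ncard :=
        (Set.ncard_le_ncard hsplit
          (((l.take m).finite_toSet.inter_of_left X).union
            ((l.drop m).finite_toSet.inter_of_left X))).trans (Set.ncard_union_le _ _)
    _ ≤ r + r * ((l.drop m).length / m + 1) :=
        add_le_add (h _ (List.take_prefix m l).isInfix (List.length_take_le m l)) ih
    _ = r * (l.length / m + 1) := by
        rw [List.length_drop, hk, Nat.add_sub_cancel, Nat.add_div_right _ hm]
        ring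
termination_by l.length
decreasing_by simp only [List.length_drop]; omega

theorem IsBetaExpander.mono {V : Type*} {H : SimpleGraph V} {β β' : ℝ} (h : IsBetaExpander H β)
    (hβ : β' ≤ β) : IsBetaExpander H β' :=
  fun U hU hcard => (mul_le_mul_of_nonneg_right hβ (Nat.cast_nonneg _)).trans (h U hU hcard)

namespace SimpleGraph

variable {V : Type*} {G : SimpleGraph V}

theorem Reachable.mem_of_adj_closed {s : Set V} (hs : ∀ ⦃a b⦄, G.Adj a b → a ∈ s → b ∈ s)
    {a b : V} (h : G.Reachable a b) (ha : a ∈ s) : b ∈ s := by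
  obtain ⟨w⟩ := h
  induction w with
  | nil => exact ha
  | cons hadj _ ih => exact ih (hs hadj ha)

theorem Connected.exists_adj_connected_induce_diff_singleton [Finite V] {P : Set V}
    (hP : (G.induce P).Connected) (h2 : 1 < P.ncard) :
    ∃ v ∈ P, ∃ y ∈ P \ {v}, G.Adj v y ∧ (G.induce (P \ {v})).Connected := by
  have : Nontrivial P := Set.nontrivial_coe_sort.mpr ((Set.one_lt_ncard_iff_nontrivial).mp h2)
  obtain ⟨v, hv⟩ := hP.exists_connected_induce_compl_singleton_of_finite_nontrivial
  let f : (G.induce P).induce {v}ᶜ →g G.induce (P \ {v.1}) :=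
    ⟨fun x => ⟨x.1.1, x.1.2, fun h => x.2 (Subtype.ext h)⟩, fun h => h⟩
  have hf : Function.Surjective f := fun y =>
    ⟨⟨⟨y.1, y.2.1⟩, fun h => y.2.2 (congrArg Subtype.val h)⟩, rfl⟩
  have hconn := hv.map f hf
  obtain ⟨u⟩ := hconn.nonempty
  have hne : v ≠ ⟨u.1, u.2.1⟩ := fun h => u.2.2 (congrArg Subtype.val h).symm
  obtain ⟨p⟩ := hP.preconnected v ⟨u.1, u.2.1⟩
  have hadj := p.adj_snd (Walk.not_nil_of_ne hne)
  exact ⟨v, v.2, p.snd, ⟨p.snd.2, fun h => hadj.ne (Subtype.ext h).symm⟩, hadj, hconn⟩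

theorem Connected.exists_closed_walk_support_eq [Finite V] {P : Set V}
    (hP : (G.induce P).Connected) :
    ∃ u, ∃ w : G.Walk u u, (∀ x, x ∈ w.support ↔ x ∈ P) ∧ w.length + 2 ≤ 2 * P.ncard := by
  classical
  induction hk : P.ncard generalizing P with
  | zero =>
    obtain ⟨u⟩ := hP.nonempty
    exact absurd hk ((Set.ncard_pos (s := P)).mpr ⟨u, u.2⟩).ne'
  | succ k ih =>
    rcases Nat.eq_zero_or_pos k with rfl | hk0
    · obtain ⟨u, rfl⟩ := Set.ncard_eq_one.mp hk
      exact ⟨u, .nil, by simp, by simp⟩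
    obtain ⟨v, hvP, y, hyP, hadj, hconn⟩ :=
      hP.exists_adj_connected_induce_diff_singleton (by omega)
    obtain ⟨u, w, hw, hlen⟩ := ih hconn (by rw [Set.ncard_sdiff_singleton_of_mem hvP, hk]; rfl)
    have hy : y ∈ w.support := (hw y).2 hyP
    refine ⟨y, .cons hadj.symm (.cons hadj (w.rotate y hy)), fun x => ?_, ?_⟩
    · simp only [Walk.support_cons, List.mem_cons, Walk.mem_support_rotate_iff, hw]
      constructor
      · rintro (rfl | rfl | h)
        exacts [hyP.1, hvP, h.1]
      · intro hx
        by_cases hxv : x = v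
        · exact Or.inr (Or.inl hxv)
        · exact Or.inr (Or.inr ⟨hx, hxv⟩)
    · simp only [Walk.length_cons, Walk.length_rotate]
      omega

theorem Connected.ncard_inter_le [Finite V] {P : Set V} (hP : (G.induce P).Connected)
    (X : Set V) {m r : ℕ} (hm : 0 < m)
    (h : ∀ l : List V, l.IsChain G.Adj → l.length ≤ m → ({x | x ∈ l} ∩ X).ncard ≤ r) :
    (P ∩ X).ncard ≤ r * ((2 * P.ncard - 1) / m + 1) := by
  obtain ⟨u, w, hw, hlen⟩ := hP.exists_closed_walk_support_eq
  have hP' : P = {x | x ∈ w.support} := by ext x; exact (hw x).symm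
  calc (P ∩ X).ncard = ({x | x ∈ w.support} ∩ X).ncard := by rw [← hP']
    _ ≤ r * (w.support.length / m + 1) :=
        List.ncard_inter_le_mul_of_infix X hm _
          fun l' hl' hlen' => h l' (w.isChain_adj_support.infix hl') hlen'
    _ ≤ r * ((2 * P.ncard - 1) / m + 1) := by
        gcongr
        rw [Walk.length_support]
        omega

def SparseOnConnectedSets (G : SimpleGraph V) (X : Set V) (T : ℕ) (θ : ℝ) : Prop :=
  ∀ P : Set V, (G.induce P).Connected → T ≤ (P ∩ X).ncard → ((P ∩ X).ncard : ℝ) ≤ θ * P.ncard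

theorem sparseOnConnectedSets_of_chains [Finite V] (X : Set V) {m T : ℕ} {θ : ℝ} (hm : 0 < m)
    (hT : 0 < T) (hθ : 4 * (T : ℝ) ≤ θ * m)
    (h : ∀ l : List V, l.IsChain G.Adj → l.length ≤ m → ({x | x ∈ l} ∩ X).ncard < T) :
    SparseOnConnectedSets G X T θ := by
  intro P hP hTP
  have hd := hP.ncard_inter_le X hm (r := T - 1) fun l hl hlen =>
    Nat.le_sub_one_of_lt (h l hl hlen)
  set z := P.ncard
  set d := (P ∩ X).ncard
  have hbig : m < 2 * z := by
    by_contra! hz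
    rw [Nat.div_eq_of_lt (by omega : 2 * z - 1 < m)] at hd
    omega
  have hdm : d * m ≤ T * (4 * z) := by
    have hq := Nat.div_mul_le_self (2 * z - 1) m
    calc d * m ≤ (T - 1) * ((2 * z - 1) / m + 1) * m := Nat.mul_le_mul_right m hd
      _ = (T - 1) * ((2 * z - 1) / m * m + m) := by ring
      _ ≤ T * (4 * z) := Nat.mul_le_mul (Nat.sub_le T 1) (by omega)
  have hmpos : (0 : ℝ) < m := by exact_mod_cast hm
  have hdm' : (d : ℝ) * m ≤ T * (4 * z) := by exact_mod_cast hdm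
  refine le_of_mul_le_mul_right ?_ hmpos
  nlinarith [(Nat.cast_nonneg z : (0 : ℝ) ≤ z)]

theorem sum_ncard_inter_supp [Finite V] [Fintype G.ConnectedComponent] (s : Set V) :
    ∑ C : G.ConnectedComponent, (s ∩ C.supp).ncard = s.ncard := by
  rw [← finsum_eq_sum_of_fintype, ← Set.ncard_iUnion_of_finite (fun _ => Set.toFinite _),
    ← Set.inter_iUnion, G.iUnion_connectedComponentSupp, Set.inter_univ]
  exact fun C C' h => (G.pairwise_disjoint_supp_connectedComponent h).mono
    Set.inter_subset_right Set.inter_subset_right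

/-- `G[U ∪ N(U)]` as a graph on all of `V`: its components cut `U` into pieces whose
neighbourhoods are disjoint. -/
def closedNbhdGraph (G : SimpleGraph V) (U : Set V) : SimpleGraph V :=
  ((⊤ : G.Subgraph).induce (U ∪ nbhd G U)).spanningCoe

theorem closedNbhdGraph_adj {U : Set V} {a b : V} :
    (closedNbhdGraph G U).Adj a b ↔ a ∈ U ∪ nbhd G U ∧ b ∈ U ∪ nbhd G U ∧ G.Adj a b := by
  simp [closedNbhdGraph]

namespace closedNbhdGraph

variable {U : Set V} (C : (closedNbhdGraph G U).ConnectedComponent)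

theorem nbhd_inter_supp_subset : nbhd G (U ∩ C.supp) ⊆ nbhd G U ∩ C.supp := by
  rintro v ⟨hv, u, ⟨huU, huC⟩, hadj⟩
  have hvU : v ∉ U := fun hvU => hv ⟨hvU,
    C.mem_supp_of_adj_mem_supp huC (closedNbhdGraph_adj.2 ⟨.inl huU, .inl hvU, hadj⟩)⟩
  have hvN : v ∈ nbhd G U := ⟨hvU, u, huU, hadj⟩
  exact ⟨hvN, C.mem_supp_of_adj_mem_supp huC (closedNbhdGraph_adj.2 ⟨.inl huU, .inr hvN, hadj⟩)⟩

theorem supp_subset_union_nbhd (hne : (U ∩ C.supp).Nonempty) :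
    C.supp ⊆ (U ∩ C.supp) ∪ nbhd G (U ∩ C.supp) := by
  obtain ⟨u₀, hu₀U, hu₀C⟩ := hne
  intro x hx
  have hxW : x ∈ U ∪ nbhd G U :=
    (C.reachable_of_mem_supp hu₀C hx).mem_of_adj_closed
      (fun _ _ h _ => (closedNbhdGraph_adj.1 h).2.1) (.inl hu₀U)
  rcases hxW with hxU | ⟨hxU, u, huU, hadj⟩
  · exact .inl ⟨hxU, hx⟩
  · refine .inr ⟨fun h => hxU h.1, u, ⟨huU, ?_⟩, hadj⟩
    exact C.mem_supp_of_adj_mem_supp hx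
      (closedNbhdGraph_adj.2 ⟨.inr ⟨hxU, u, huU, hadj⟩, .inl huU, hadj.symm⟩)

theorem connected_induce_supp : (G.induce C.supp).Connected := by
  refine C.maximal_connected_induce_supp.prop.mono fun _ _ h => ?_
  exact (closedNbhdGraph_adj.1 h).2.2

end closedNbhdGraph

section Expansion

variable [Finite V] {f : ℕ → ℝ} {c α : ℝ} {T : ℕ} {S : Set V}

variable (hG : IsFExpander G f) (hf : ∀ k : ℕ, 0 < k → c ≤ f k) (hc : 0 < c) (hα : 0 < α)
  (hα1 : α ≤ 1) (hsparse : SparseOnConnectedSets G Sᶜ T (3 * c / (4 * (1 + c))))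
  (hT : (T : ℝ) ≤ 3 / α)
include hG hf hc hα hα1 hsparse hT

/-- Otherwise more than three quarters of the at least `c |A|` vertices of `N(A)` would be
deleted: at least `T` of them (as `|A| > 4 / (α c)`), and more than a `3c/(4(1+c))`-fraction of
`P ⊆ A ∪ N(A)`. -/
theorem mul_ncard_le_ncard_nbhd_inter_of_connected {A P : Set V} (hA : A.Nonempty)
    (hAn : (A.ncard : ℝ) ≤ Nat.card V / 2) (hP : (G.induce P).Connected)
    (hNP : nbhd G A ⊆ P) (hPA : P ⊆ A ∪ nbhd G A) (hb : (nbhd G A ∩ S).Nonempty) :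
    α * c / 4 * A.ncard ≤ (nbhd G A ∩ S).ncard := by
  by_contra! hlt
  set a := A.ncard
  set t := (nbhd G A).ncard
  set b := (nbhd G A ∩ S).ncard
  set d := (P ∩ Sᶜ).ncard
  have hta : c * a ≤ t :=
    (mul_le_mul_of_nonneg_right (hf a ((Set.ncard_pos).2 hA)) (Nat.cast_nonneg a)).trans
      (hG A hA hAn)
  have hb1 : (1 : ℝ) ≤ b := by exact_mod_cast (Set.ncard_pos).2 hb
  have htd : (t : ℝ) ≤ b + d := by
    have hsplit := Set.ncard_inter_add_ncard_sdiff_eq_ncard (nbhd G A) S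
    have hdiff : (nbhd G A \ S).ncard ≤ d := Set.ncard_le_ncard fun x hx => ⟨hNP hx.1, hx.2⟩
    exact_mod_cast hsplit ▸ Nat.add_le_add_left hdiff b
  have hPat : (P.ncard : ℝ) ≤ a + t := by
    exact_mod_cast (Set.ncard_le_ncard hPA).trans (Set.ncard_union_le A (nbhd G A))
  have hbt : (b : ℝ) < t / 4 := by nlinarith
  have hTd : T ≤ d := by
    have : (T : ℝ) < d := by
      have hαca : 4 < α * c * a := by linarith
      calc (T : ℝ) ≤ 3 / α := hT
        _ < 3 / 4 * (c * a) := by rw [div_lt_iff₀ hα]; nlinarith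
        _ ≤ d := by linarith
    exact_mod_cast this.le
  have hdP := hsparse P hP hTd
  have hθ : 3 * c / (4 * (1 + c)) * P.ncard ≤ 3 / 4 * t := by
    rw [div_mul_eq_mul_div, div_le_iff₀ (by positivity)]
    nlinarith
  linarith

theorem mul_ncard_le_ncard_nbhd_inter {U : Set V} (hUn : (U.ncard : ℝ) ≤ Nat.card V / 2)
    (hclosed : ∀ U' ⊆ U, U'.Nonempty → (nbhd G U' ∩ S).Nonempty) :
    α * c / 4 * U.ncard ≤ (nbhd G U ∩ S).ncard := by
  classical
  have := Fintype.ofFinite (closedNbhdGraph G U).ConnectedComponent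
  have hpiece (C : (closedNbhdGraph G U).ConnectedComponent) :
      α * c / 4 * (U ∩ C.supp).ncard ≤ ((nbhd G U ∩ S) ∩ C.supp).ncard := by
    rcases (U ∩ C.supp).eq_empty_or_nonempty with h | h
    · simp [h]
    have hsub := closedNbhdGraph.nbhd_inter_supp_subset C
    calc α * c / 4 * (U ∩ C.supp).ncard ≤ (nbhd G (U ∩ C.supp) ∩ S).ncard :=
          mul_ncard_le_ncard_nbhd_inter_of_connected hG hf hc hα hα1 hsparse hT h
            ((Nat.cast_le.2 (Set.ncard_le_ncard Set.inter_subset_left)).trans hUn)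
            (closedNbhdGraph.connected_induce_supp C) (hsub.trans Set.inter_subset_right)
            (closedNbhdGraph.supp_subset_union_nbhd C h) (hclosed _ Set.inter_subset_left h)
      _ ≤ ((nbhd G U ∩ S) ∩ C.supp).ncard := by
          refine Nat.cast_le.2 (Set.ncard_le_ncard fun x hx => ?_)
          exact ⟨⟨(hsub hx.1).1, hx.2⟩, (hsub hx.1).2⟩
  calc α * c / 4 * U.ncard
      = ∑ C : (closedNbhdGraph G U).ConnectedComponent, α * c / 4 * (U ∩ C.supp).ncard := by
        rw [← Finset.mul_sum, ← Nat.cast_sum, sum_ncard_inter_supp]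
    _ ≤ ∑ C : (closedNbhdGraph G U).ConnectedComponent, ((nbhd G U ∩ S ∩ C.supp).ncard : ℝ) :=
        Finset.sum_le_sum fun C _ => hpiece C
    _ = (nbhd G U ∩ S).ncard := by rw [← Nat.cast_sum, sum_ncard_inter_supp]

theorem isBetaExpander_induce_supp (C : (G.induce S).ConnectedComponent) :
    IsBetaExpander ((G.induce S).induce C.supp) (α * c / 4) := by
  intro U hU hUC
  let ι : C.supp → V := fun x => x.1.1
  have hι : Function.Injective ι := fun x y h => Subtype.ext (Subtype.ext h)
  have himage : ι '' nbhd ((G.induce S).induce C.supp) U = nbhd G (ι '' U) ∩ S := by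
    ext v
    constructor
    · rintro ⟨x, ⟨hxU, u, huU, hadj⟩, rfl⟩
      exact ⟨⟨fun ⟨y, hy, hyx⟩ => hxU (hι hyx ▸ hy), ι u, ⟨u, huU, rfl⟩, hadj⟩, x.1.2⟩
    · rintro ⟨⟨hvU, _, ⟨u, huU, rfl⟩, hadj⟩, hvS⟩
      have hvC : (⟨v, hvS⟩ : S) ∈ C.supp := C.mem_supp_of_adj_mem_supp u.2 hadj
      exact ⟨⟨⟨v, hvS⟩, hvC⟩, ⟨fun hx => hvU ⟨_, hx, rfl⟩, u, huU, hadj⟩, rfl⟩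
  have hCV : (Nat.card C.supp : ℝ) ≤ Nat.card V := by
    exact_mod_cast Nat.card_le_card_of_injective ι hι
  have hclosed : ∀ W ⊆ ι '' U, W.Nonempty → (nbhd G W ∩ S).Nonempty := by
    rintro W hWU ⟨_, hw⟩
    by_contra hempty
    obtain ⟨u, -, rfl⟩ := hWU hw
    have hCW : Set.range ι ⊆ W := by
      rintro _ ⟨x, rfl⟩
      refine (C.reachable_of_mem_supp u.2 x.2).mem_of_adj_closed (s := {y : S | y.1 ∈ W})
        (fun a b hab ha => ?_) hw
      by_contra hb
      exact hempty ⟨b.1, ⟨hb, a.1, ha, hab⟩, b.2⟩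
    have hCU : Nat.card C.supp ≤ U.ncard := by
      rw [← Set.ncard_range_of_injective hι, ← Set.ncard_image_of_injective U hι]
      exact Set.ncard_le_ncard (hCW.trans hWU)
    have hU1 : (1 : ℝ) ≤ U.ncard := by exact_mod_cast (Set.ncard_pos).2 hU
    have : (Nat.card C.supp : ℝ) ≤ U.ncard := by exact_mod_cast hCU
    linarith
  have hUn : ((ι '' U).ncard : ℝ) ≤ Nat.card V / 2 := by
    rw [Set.ncard_image_of_injective U hι]
    linarith
  have := mul_ncard_le_ncard_nbhd_inter hG hf hc hα hα1 hsparse hT hUn hclosed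
  rwa [Set.ncard_image_of_injective U hι, ← himage, Set.ncard_image_of_injective _ hι] at this

theorem exists_max_component_isBetaExpander (hS : S.Nonempty) :
    ∃ C₁ : (G.induce S).ConnectedComponent,
      (∀ C' : (G.induce S).ConnectedComponent, C'.supp.ncard ≤ C₁.supp.ncard) ∧
        IsBetaExpander ((G.induce S).induce C₁.supp) (α * c / 4) := by
  have : Nonempty (G.induce S).ConnectedComponent :=
    ⟨(G.induce S).connectedComponentMk ⟨hS.some, hS.some_mem⟩⟩
  obtain ⟨C₁, hC₁⟩ := Finite.exists_max fun C : (G.induce S).ConnectedComponent => C.supp.ncard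
  exact ⟨C₁, hC₁, isBetaExpander_induce_supp hG hf hc hα hα1 hsparse hT C₁⟩

end Expansion

end SimpleGraph

section Deletion

open Finset

instance (p : ENNReal) : IsProbabilityMeasure (bern p) := PMF.toMeasure.isProbabilityMeasure _

instance (n : ℕ) (α : ℝ) : IsProbabilityMeasure (delMeasure n α) := by
  unfold delMeasure
  infer_instance

theorem bern_singleton_true (p : ENNReal) : bern p {true} = min p 1 := by
  rw [bern, PMF.toMeasure_apply_singleton _ _ (measurableSet_singleton _)]
  show (((min p 1).toNNReal : ENNReal)) = min p 1
  exact ENNReal.coe_toNNReal (ne_top_of_le_ne_top ENNReal.one_ne_top (min_le_right p 1))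

variable {ι : Type*} [Fintype ι] (p : ENNReal)

theorem pi_bern_forall_true (D : Finset ι) :
    Measure.pi (fun _ : ι => bern p) {ω | ∀ v ∈ D, ω v = true} = min p 1 ^ #D := by
  classical
  have hset : {ω : ι → Bool | ∀ v ∈ D, ω v = true}
      = Set.univ.pi fun v => if v ∈ D then {true} else Set.univ := by
    ext ω
    simp only [Set.mem_ofPred_eq, Set.mem_univ_pi]
    refine forall_congr' fun v => ?_
    split_ifs with hv <;> simp [hv]
  rw [hset, Measure.pi_pi]
  simp only [apply_ite, bern_singleton_true, measure_univ]
  rw [prod_ite_mem, univ_inter, prod_const]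

theorem pi_bern_le_of_le_card (D : Finset ι) (T : ℕ) :
    Measure.pi (fun _ : ι => bern p) {ω | T ≤ #(D.filter (ω · = true))}
      ≤ 2 ^ #D * min p 1 ^ T := by
  classical
  calc Measure.pi (fun _ : ι => bern p) {ω | T ≤ #(D.filter (ω · = true))}
      ≤ Measure.pi (fun _ : ι => bern p)
          (⋃ D' ∈ D.powersetCard T, {ω | ∀ v ∈ D', ω v = true}) := by
        refine measure_mono fun ω hω => ?_
        obtain ⟨D', hD', hcard⟩ := exists_subset_card_eq hω
        exact Set.mem_iUnion₂.2 ⟨D', mem_powersetCard.2 ⟨hD'.trans (filter_subset _ _), hcard⟩,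
          fun v hv => (mem_filter.1 (hD' hv)).2⟩
    _ ≤ ∑ D' ∈ D.powersetCard T, Measure.pi (fun _ : ι => bern p) {ω | ∀ v ∈ D', ω v = true} :=
        measure_biUnion_finset_le _ _
    _ = (#D).choose T * min p 1 ^ T := by
        rw [sum_congr rfl fun D' hD' => by rw [pi_bern_forall_true, (mem_powersetCard.1 hD').2],
          sum_const, card_powersetCard, nsmul_eq_mul]
    _ ≤ 2 ^ #D * min p 1 ^ T := by
        gcongr
        exact_mod_cast Nat.choose_le_two_pow _ _

section Chains

variable {V : Type*} [Fintype V] [DecidableEq V] (G : SimpleGraph V) [DecidableRel G.Adj]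

namespace SimpleGraph

def chainsOfLength : ℕ → Finset (List V)
  | 0 => {[]}
  | k + 1 => (chainsOfLength k).biUnion fun l =>
      (univ.filter fun v => ∀ y ∈ l.head?, G.Adj v y).image (· :: l)

theorem mem_chainsOfLength {k : ℕ} {l : List V} :
    l ∈ G.chainsOfLength k ↔ l.IsChain G.Adj ∧ l.length = k := by
  induction k generalizing l with
  | zero => simp +contextual [chainsOfLength]
  | succ k ih =>
    cases l with
    | nil => simp [chainsOfLength]
    | cons a l =>
      simp only [chainsOfLength, mem_biUnion, mem_image, mem_filter, mem_univ, true_and,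
        List.cons.injEq, List.isChain_cons, List.length_cons, ih]
      constructor
      · rintro ⟨l', ⟨hl', rfl⟩, v, hv, rfl, rfl⟩
        exact ⟨⟨hv, hl'⟩, rfl⟩
      · rintro ⟨⟨hv, hl⟩, hk⟩
        exact ⟨l, ⟨hl, by omega⟩, a, hv, rfl, rfl⟩

theorem card_chainsOfLength_succ_le {Δ : ℕ} (hΔ : ∀ v, (G.neighborSet v).ncard ≤ Δ) (k : ℕ) :
    #(G.chainsOfLength (k + 1)) ≤ Fintype.card V * Δ ^ k := by
  induction k with
  | zero => simpa [chainsOfLength] using card_image_le (s := univ) (f := fun v : V => [v])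
  | succ k ih =>
    have hext : ∀ l ∈ G.chainsOfLength (k + 1),
        #((univ.filter fun v => ∀ y ∈ l.head?, G.Adj v y).image (· :: l)) ≤ Δ := by
      intro l hl
      obtain ⟨a, l', rfl⟩ : ∃ a l', l = a :: l' :=
        List.exists_of_length_succ l ((G.mem_chainsOfLength).1 hl).2
      have : ((univ.filter fun v => ∀ y ∈ (a :: l').head?, G.Adj v y : Finset V) : Set V)
          = G.neighborSet a := by
        ext v
        simp [adj_comm]
      exact card_image_le.trans (by rw [← Set.ncard_coe_finset, this]; exact hΔ a)
    calc #(G.chainsOfLength (k + 2)) ≤ ∑ _l ∈ G.chainsOfLength (k + 1), Δ :=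
          card_biUnion_le.trans (sum_le_sum hext)
      _ = #(G.chainsOfLength (k + 1)) * Δ := by rw [sum_const, smul_eq_mul]
      _ ≤ Fintype.card V * Δ ^ k * Δ := Nat.mul_le_mul_right Δ ih
      _ = Fintype.card V * Δ ^ (k + 1) := by ring

theorem setOf_exists_chain_subset_biUnion {m T : ℕ} (hT : 0 < T) :
    {ω : V → Bool | ∃ l : List V, l.IsChain G.Adj ∧ l.length ≤ m ∧
        T ≤ ({x | x ∈ l} ∩ {v | ω v = true}).ncard}
      ⊆ ⋃ k ∈ range m, ⋃ l ∈ G.chainsOfLength (k + 1),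
          {ω | T ≤ #(l.toFinset.filter (ω · = true))} := by
  rintro ω ⟨l, hl, hlen, hTl⟩
  have hset : {x | x ∈ l} ∩ {v | ω v = true} = ↑(l.toFinset.filter (ω · = true)) := by
    ext
    simp
  rw [hset, Set.ncard_coe_finset] at hTl
  obtain ⟨k, hk⟩ : ∃ k, l.length = k + 1 := by
    cases l with
    | nil => simp at hTl; omega
    | cons a l => exact ⟨l.length, rfl⟩
  exact Set.mem_iUnion₂.2 ⟨k, mem_range.2 (by omega),
    Set.mem_iUnion₂.2 ⟨l, (G.mem_chainsOfLength).2 ⟨hl, hk⟩, hTl⟩⟩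

end SimpleGraph

end Chains

theorem pi_bern_exists_chain_le {V : Type*} [Fintype V] (G : SimpleGraph V) {Δ : ℕ}
    (hΔ : ∀ v, (G.neighborSet v).ncard ≤ Δ) {m T : ℕ} (hT : 0 < T) :
    Measure.pi (fun _ : V => bern p) {ω | ∃ l : List V, l.IsChain G.Adj ∧ l.length ≤ m ∧
        T ≤ ({x | x ∈ l} ∩ {v | ω v = true}).ncard}
      ≤ (m * Fintype.card V * (Δ + 1) ^ m * 2 ^ m : ℕ) * min p 1 ^ T := by
  classical
  set μ := Measure.pi fun _ : V => bern p
  set E : List V → Set (V → Bool) := fun l => {ω | T ≤ #(l.toFinset.filter (ω · = true))}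
  have hE : ∀ k < m, ∀ l ∈ G.chainsOfLength (k + 1), μ (E l) ≤ 2 ^ m * min p 1 ^ T := by
    intro k hk l hl
    refine (pi_bern_le_of_le_card p _ T).trans ?_
    gcongr
    · exact one_le_two
    · exact l.toFinset_card_le.trans (((G.mem_chainsOfLength).1 hl).2.trans_le hk)
  have hcard : ∀ k < m, #(G.chainsOfLength (k + 1)) ≤ Fintype.card V * (Δ + 1) ^ m :=
    fun k hk => (G.card_chainsOfLength_succ_le hΔ k).trans (Nat.mul_le_mul_left _
      ((Nat.pow_le_pow_left (Nat.le_succ Δ) k).trans (Nat.pow_le_pow_right Δ.succ_pos hk.le)))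
  calc μ {ω | ∃ l : List V, l.IsChain G.Adj ∧ l.length ≤ m ∧
          T ≤ ({x | x ∈ l} ∩ {v | ω v = true}).ncard}
      ≤ μ (⋃ k ∈ range m, ⋃ l ∈ G.chainsOfLength (k + 1), E l) :=
        measure_mono (G.setOf_exists_chain_subset_biUnion hT)
    _ ≤ ∑ k ∈ range m, ∑ l ∈ G.chainsOfLength (k + 1), μ (E l) :=
        (measure_biUnion_finset_le _ _).trans (sum_le_sum fun _ _ => measure_biUnion_finset_le _ _)
    _ ≤ ∑ k ∈ range m, ∑ _l ∈ G.chainsOfLength (k + 1), 2 ^ m * min p 1 ^ T :=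
        sum_le_sum fun k hk => sum_le_sum fun l hl => hE k (mem_range.1 hk) l hl
    _ ≤ ∑ _k ∈ range m, ((Fintype.card V * (Δ + 1) ^ m : ℕ) : ENNReal) * (2 ^ m * min p 1 ^ T) := by
        refine sum_le_sum fun k hk => ?_
        rw [sum_const, nsmul_eq_mul]
        gcongr
        exact_mod_cast hcard k (mem_range.1 hk)
    _ = (m * Fintype.card V * (Δ + 1) ^ m * 2 ^ m : ℕ) * min p 1 ^ T := by
        rw [sum_const, card_range, nsmul_eq_mul]
        push_cast
        ring

end Deletion

open Filter Topology

theorem one_sub_le_measure_of_compl_subset {Ω : Type*} [MeasurableSpace Ω] (μ : Measure Ω)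
    [IsProbabilityMeasure μ] {E B : Set Ω} (hEB : Bᶜ ⊆ E) {δ : ENNReal} (hB : μ B ≤ δ) :
    1 - δ ≤ μ E := by
  refine tsub_le_iff_right.2 ?_
  calc 1 = μ Set.univ := measure_univ.symm
    _ ≤ μ (E ∪ B) := measure_mono fun ω _ => (em (ω ∈ B)).elim .inr fun h => .inl (hEB h)
    _ ≤ μ E + μ B := measure_union_le _ _
    _ ≤ μ E + δ := add_le_add_right hB _

theorem eventually_rpow_neg_le_and_mul_le {α : ℝ} (hα : 0 < α) {T : ℕ} (hT : 1 < α * T) (C : ℝ)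
    {ε : ℝ} (hε : 0 < ε) :
    ∀ᶠ n : ℕ in atTop, (n : ℝ) ^ (-α) ≤ ε / 2 ∧ C * n * ((n : ℝ) ^ (-α)) ^ T ≤ ε / 2 := by
  have h1 : Tendsto (fun n : ℕ => (n : ℝ) ^ (-α)) atTop (𝓝 0) :=
    (tendsto_rpow_neg_atTop hα).comp tendsto_natCast_atTop_atTop
  have h2 : Tendsto (fun n : ℕ => C * n * ((n : ℝ) ^ (-α)) ^ T) atTop (𝓝 0) := by
    have := ((tendsto_rpow_neg_atTop (sub_pos.2 hT)).comp tendsto_natCast_atTop_atTop).const_mul C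
    rw [mul_zero] at this
    refine this.congr' ?_
    filter_upwards [eventually_gt_atTop 0] with n hn
    have hn' : (0 : ℝ) < n := by exact_mod_cast hn
    rw [Function.comp_apply, show -(α * T - 1) = 1 + -α * T by ring, Real.rpow_add hn',
      Real.rpow_one, ← Real.rpow_natCast, ← Real.rpow_mul hn'.le, mul_assoc]
  exact (h1.eventually (Iic_mem_nhds (half_pos hε))).and
    (h2.eventually (Iic_mem_nhds (half_pos hε)))

theorem exists_deletion_parameters {α θ : ℝ} (hα : 0 < α) (hα1 : α ≤ 1) (hθ : 0 < θ) :
    ∃ T m : ℕ, 0 < T ∧ 0 < m ∧ 2 ≤ α * T ∧ (T : ℝ) ≤ 3 / α ∧ 4 * (T : ℝ) ≤ θ * m := by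
  set T := ⌈2 / α⌉₊
  refine ⟨T, ⌈4 * T / θ⌉₊, Nat.ceil_pos.2 (div_pos two_pos hα), Nat.ceil_pos.2 ?_, ?_, ?_, ?_⟩
  · have : 0 < T := Nat.ceil_pos.2 (div_pos two_pos hα)
    positivity
  · rw [← div_le_iff₀' hα]
    exact Nat.le_ceil _
  · have := mul_lt_mul_of_pos_left (Nat.ceil_lt_add_one (div_pos two_pos hα).le) hα
    rw [mul_add, mul_div_cancel₀ _ hα.ne', mul_one] at this
    rw [le_div_iff₀' hα]
    linarith
  · rw [← div_le_iff₀' hθ]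
    exact Nat.le_ceil _

theorem one_div_natCast_mul_min_le (Δ K : ℕ) {x : ℝ} (hx : 0 ≤ x) :
    1 / (Δ : ℝ) * min (1 / (K : ℝ)) x ≤ x :=
  calc 1 / (Δ : ℝ) * min (1 / (K : ℝ)) x ≤ 1 * min (1 / (K : ℝ)) x :=
        mul_le_mul_of_nonneg_right (by simpa using Nat.cast_inv_le_one Δ)
          (le_min (by positivity) hx)
    _ ≤ x := by rw [one_mul]; exact min_le_right _ _

theorem compl_survivors {n : ℕ} (ω : Fin n → Bool) : (survivors ω)ᶜ = {v | ω v = true} := by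
  ext
  simp [survivors]

theorem delMeasure_deleted_or_exists_chain_le {n : ℕ} (α : ℝ) (G : SimpleGraph (Fin n)) {Δ : ℕ}
    (hΔ : ∀ v, (G.neighborSet v).ncard ≤ Δ) (v₀ : Fin n) {m T : ℕ} (hT : 0 < T) :
    delMeasure n α ({ω | ω v₀ = true} ∪ {ω | ∃ l : List (Fin n), l.IsChain G.Adj ∧
        l.length ≤ m ∧ T ≤ ({x | x ∈ l} ∩ {v | ω v = true}).ncard})
      ≤ ENNReal.ofReal ((n : ℝ) ^ (-α))
        + ENNReal.ofReal (m * (Δ + 1) ^ m * 2 ^ m * n * ((n : ℝ) ^ (-α)) ^ T) := by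
  set p := ENNReal.ofReal ((n : ℝ) ^ (-α))
  refine (measure_union_le _ _).trans (add_le_add ?_ ?_)
  · have := pi_bern_forall_true p {v₀}
    simp only [Finset.mem_singleton, forall_eq, Finset.card_singleton, pow_one] at this
    exact this.le.trans (min_le_left _ _)
  · have hq : min p 1 ^ T ≤ ENNReal.ofReal (((n : ℝ) ^ (-α)) ^ T) := by
      rw [ENNReal.ofReal_pow (by positivity)]
      exact pow_le_pow_left' (min_le_left _ _) T
    refine (pi_bern_exists_chain_le p G hΔ hT).trans ?_
    calc ((m * Fintype.card (Fin n) * (Δ + 1) ^ m * 2 ^ m : ℕ) : ENNReal) * min p 1 ^ T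
        ≤ ((m * n * (Δ + 1) ^ m * 2 ^ m : ℕ) : ENNReal)
            * ENNReal.ofReal (((n : ℝ) ^ (-α)) ^ T) := by
          rw [Fintype.card_fin]
          gcongr
      _ = ENNReal.ofReal (m * (Δ + 1) ^ m * 2 ^ m * n * ((n : ℝ) ^ (-α)) ^ T) := by
          rw [← ENNReal.ofReal_natCast, ← ENNReal.ofReal_mul (by positivity)]
          push_cast
          ring_nf

theorem giant_component_is_expander_general
    (α c : ℝ) (hα : 0 < α) (hα1 : α ≤ 1) (hc : 0 < c) (Δ : ℕ)
    (f : ℕ → ℝ) (hf : ∀ k : ℕ, 0 < k → c ≤ f k) :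
    ∀ ε : ℝ, 0 < ε → ∃ n₀ : ℕ, ∀ n : ℕ, n₀ ≤ n →
      ∀ G : SimpleGraph (Fin n),
        (∀ v : Fin n, (G.neighborSet v).ncard ≤ Δ) →
        IsFExpander G f →
        1 - ENNReal.ofReal ε ≤ delMeasure n α
          {ω : Fin n → Bool |
            ∃ C₁ : (G.induce (survivors ω)).ConnectedComponent,
              (∀ C' : (G.induce (survivors ω)).ConnectedComponent,
                C'.supp.ncard ≤ C₁.supp.ncard) ∧
              IsBetaExpander ((G.induce (survivors ω)).induce C₁.supp)
                ((1 / (Δ : ℝ)) * min (1 / (Kconst α f : ℝ)) (α * c / 4))} := by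
  intro ε hε
  obtain ⟨T, m, hT, hm, hαT, hT3, hθm⟩ :=
    exists_deletion_parameters hα hα1 (θ := 3 * c / (4 * (1 + c))) (by positivity)
  obtain ⟨n₀, hn₀⟩ := eventually_atTop.1
    (eventually_rpow_neg_le_and_mul_le hα (T := T) (by linarith) (m * (Δ + 1) ^ m * 2 ^ m) hε)
  refine ⟨max n₀ 1, fun n hn G hdeg hexp => ?_⟩
  let v₀ : Fin n := ⟨0, by omega⟩
  refine one_sub_le_measure_of_compl_subset _ (fun ω hω => ?_)
    ((delMeasure_deleted_or_exists_chain_le α G hdeg v₀ (m := m) hT).trans ?_)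
  · simp only [Set.mem_compl_iff, Set.mem_union, not_or, Set.mem_ofPred_eq, not_exists,
      not_and, not_le] at hω
    have hsparse := compl_survivors ω ▸ G.sparseOnConnectedSets_of_chains _ hm hT hθm hω.2
    obtain ⟨C₁, hC₁, hC₁exp⟩ := G.exists_max_component_isBetaExpander hexp hf hc hα hα1 hsparse
      hT3 ⟨v₀, by simpa [survivors] using hω.1⟩
    exact ⟨C₁, hC₁, hC₁exp.mono (one_div_natCast_mul_min_le _ _ (by positivity))⟩
  · obtain ⟨h1, h2⟩ := hn₀ n (le_of_max_le_left hn)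
    calc _ ≤ ENNReal.ofReal (ε / 2) + ENNReal.ofReal (ε / 2) :=
          add_le_add (ENNReal.ofReal_le_ofReal h1) (ENNReal.ofReal_le_ofReal h2)
      _ = ENNReal.ofReal ε := by
          rw [← ENNReal.ofReal_add (by positivity) (by positivity), add_halves]

theorem giant_component_is_expander
    (α c : ℝ) (hα : 0 < α) (hα1 : α ≤ 1) (hc : 0 < c) (Δ : ℕ) (hΔ : 1 ≤ Δ)
    (f : ℕ → ℝ) (hf : ∀ k : ℕ, 0 < k → c ≤ f k) :
    ∀ ε : ℝ, 0 < ε → ∃ n₀ : ℕ, ∀ n : ℕ, n₀ ≤ n →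
      ∀ G : SimpleGraph (Fin n),
        (∀ v : Fin n, (G.neighborSet v).ncard ≤ Δ) →
        IsFExpander G f →
        1 - ENNReal.ofReal ε ≤ delMeasure n α
          {ω : Fin n → Bool |
            ∃ C₁ : (G.induce (survivors ω)).ConnectedComponent,
              (∀ C' : (G.induce (survivors ω)).ConnectedComponent,
                C'.supp.ncard ≤ C₁.supp.ncard) ∧
              IsBetaExpander ((G.induce (survivors ω)).induce C₁.supp)
                ((1 / (Δ : ℝ)) * min (1 / (Kconst α f : ℝ)) (α * c / 4))} :=
  giant_component_is_expander_general α c hα hα1 hc Δ f hf
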